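/- Consider the map F : ℝ⁴ → ℝ⁴ sending (h0, φ0, ψ, ι) to (A1, A2, A3, A4), where with A₊ := (1 + cos² ι)/2 and A₋ₓ := cos ι one sets A1 := h0 A₊ cos 2ψ cos φ0 − h0 A₋ₓ sin 2ψ sin φ0, A2 := h0 A₊ sin 2ψ cos φ0 + h0 A₋ₓ cos 2ψ sin φ0, A3 := −h0 A₊ cos 2ψ sin φ0 − h0 A₋ₓ sin 2ψ cos φ0, A4 := −h0 A₊ sin 2ψ sin φ0 + h0 A₋ₓ cos 2ψ cos φ0. At every point (h0, φ0, ψ, ι) with cos ι = 1 or cos ι = −1, the determinant of the Jacobian matrix of F vanishes. Consequently, for any 4×4 matrix Γ(𝐀), the Fisher matrix Γ(θ) = Jᵀ Γ(𝐀) J has zero determinant at such points, so Γ(θ) is not invertible there. -/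

import Mathlib

open Real Matrix

/-!
Every amplitude is `A₊(ι) • u + A×(ι) • v` with `u, v` independent of `ι`, and both
`A₊ = (1 + cos² ι)/2` and `A× = cos ι` factor through `cos ι`. Hence `∂A/∂ι` carries a factor
`sin ι`, which vanishes when `cos ι = ±1`: the `ι`-column of the Jacobian is zero, so `det J = 0`
and `det (Jᵀ Γ J) = det Γ · (det J)² = 0`.
-/

theorem fderiv_apply_single_eq_zero_of_hasDerivAt_update {𝕜 ι E : Type*}
    [NontriviallyNormedField 𝕜] [Fintype ι] [DecidableEq ι]
    [NormedAddCommGroup E] [NormedSpace 𝕜 E] {F : (ι → 𝕜) → E} {θ : ι → 𝕜} {i : ι}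
    (h : HasDerivAt (fun t => F (Function.update θ i t)) 0 (θ i)) :
    fderiv 𝕜 F θ (Pi.single i 1) = 0 := by
  by_cases hF : DifferentiableAt 𝕜 F θ
  · exact (hF.hasFDerivAt.comp_hasDerivAt_of_eq (θ i) (hasDerivAt_update θ i (θ i))
      (by simp)).unique h
  · simp [fderiv_zero_of_not_differentiableAt hF]

theorem hasDerivAt_comp_cos_of_sin_eq_zero {E : Type*} [NormedAddCommGroup E] [NormedSpace ℝ E]
    {G : ℝ → E} {x : ℝ} (hG : DifferentiableAt ℝ G (cos x)) (hx : sin x = 0) :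
    HasDerivAt (fun t => G (cos t)) 0 x := by
  simpa [hx, Function.comp_def] using hG.hasDerivAt.scomp x (hasDerivAt_cos x)

theorem jacobian_singular_at_cos_iota_pm_one
    (F : (Fin 4 → ℝ) → (Fin 4 → ℝ))
    (hF : F = fun θ =>
      ![θ 0 * ((1 + Real.cos (θ 3) ^ 2) / 2) * Real.cos (2 * θ 2) * Real.cos (θ 1)
          - θ 0 * Real.cos (θ 3) * Real.sin (2 * θ 2) * Real.sin (θ 1),
        θ 0 * ((1 + Real.cos (θ 3) ^ 2) / 2) * Real.sin (2 * θ 2) * Real.cos (θ 1)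
          + θ 0 * Real.cos (θ 3) * Real.cos (2 * θ 2) * Real.sin (θ 1),
        -(θ 0 * ((1 + Real.cos (θ 3) ^ 2) / 2)) * Real.cos (2 * θ 2) * Real.sin (θ 1)
          - θ 0 * Real.cos (θ 3) * Real.sin (2 * θ 2) * Real.cos (θ 1),
        -(θ 0 * ((1 + Real.cos (θ 3) ^ 2) / 2)) * Real.sin (2 * θ 2) * Real.sin (θ 1)
          + θ 0 * Real.cos (θ 3) * Real.cos (2 * θ 2) * Real.cos (θ 1)]) :
    ∀ θ : Fin 4 → ℝ, (Real.cos (θ 3) = 1 ∨ Real.cos (θ 3) = -1) →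
      let J : Matrix (Fin 4) (Fin 4) ℝ :=
        Matrix.of fun k i => fderiv ℝ F θ (Pi.single i 1) k
      J.det = 0 ∧
      ∀ ΓA : Matrix (Fin 4) (Fin 4) ℝ,
        (Jᵀ * ΓA * J).det = 0 ∧ ¬ IsUnit (Jᵀ * ΓA * J) := by
  intro θ hcos J
  have hsin : sin (θ 3) = 0 := sin_eq_zero_iff_cos_eq.mpr hcos
  set u : Fin 4 → ℝ := ![θ 0 * cos (2 * θ 2) * cos (θ 1), θ 0 * sin (2 * θ 2) * cos (θ 1),
    -(θ 0 * cos (2 * θ 2) * sin (θ 1)), -(θ 0 * sin (2 * θ 2) * sin (θ 1))]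
  set v : Fin 4 → ℝ := ![-(θ 0 * sin (2 * θ 2) * sin (θ 1)), θ 0 * cos (2 * θ 2) * sin (θ 1),
    -(θ 0 * sin (2 * θ 2) * cos (θ 1)), θ 0 * cos (2 * θ 2) * cos (θ 1)]
  have hF_update : ∀ t, F (Function.update θ 3 t) = ((1 + cos t ^ 2) / 2) • u + cos t • v := by
    intro t
    ext k
    fin_cases k <;> simp [hF, u, v, Function.update] <;> ring
  have hJ_col : fderiv ℝ F θ (Pi.single 3 1) = 0 := by
    apply fderiv_apply_single_eq_zero_of_hasDerivAt_update
    simp only [hF_update]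
    exact hasDerivAt_comp_cos_of_sin_eq_zero (G := fun c => ((1 + c ^ 2) / 2) • u + c • v)
      (by fun_prop) hsin
  have hJ : J.det = 0 := det_eq_zero_of_column_eq_zero 3 (fun k => congrFun hJ_col k)
  have hdet : ∀ ΓA : Matrix (Fin 4) (Fin 4) ℝ, (Jᵀ * ΓA * J).det = 0 := by
    intro ΓA
    rw [det_mul, hJ, mul_zero]
  exact ⟨hJ, fun ΓA => ⟨hdet ΓA, by
    rw [isUnit_iff_isUnit_det, hdet ΓA]; exact not_isUnit_zero⟩⟩
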